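/- arXiv:2301.03123 — 2 statements merged into one kernel-verified Lean document; each statement's English description precedes it below -/
import Mathlib

section
/- Let X be a schematic space with structure functor 𝒪. Then for every x ≤ y in X, the restriction ring homomorphism r_{x y} : 𝒪(x) → 𝒪(y) is an epimorphism in the category of commutative rings; equivalently, the multiplication map 𝒪(y) ⊗_{𝒪(x)} 𝒪(y) → 𝒪(y) is bijective. In particular (combined with hypothesis (i)), all restriction morphisms of a schematic space are flat epimorphisms of rings. -/
open CategoryTheory TensorProduct

universe u

variable {X : Type u} [PartialOrder X] (𝒪 : X ⥤ CommRingCat.{u})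

/-- The subposet `S = U_x ∩ U_y` of common upper bounds of `x` and `y`. -/
def Sxy (x y : X) : Type u := {z : X // x ≤ z ∧ y ≤ z}

/-- The canonical ring homomorphism `𝒪(x) ⊗_{𝒪(t)} 𝒪(y) → ∏_{z ∈ S} 𝒪(z)`,
`a ⊗ b ↦ (r_{x z}(a) · r_{y z}(b))_z`. -/
noncomputable def canMap {t x y : X} (htx : t ≤ x) (hty : t ≤ y) :
    letI : Algebra (𝒪.obj t) (𝒪.obj x) := (𝒪.map (homOfLE htx)).hom.toAlgebra
    letI : Algebra (𝒪.obj t) (𝒪.obj y) := (𝒪.map (homOfLE hty)).hom.toAlgebra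
    TensorProduct (𝒪.obj t) (𝒪.obj x) (𝒪.obj y) →+* ((z : Sxy x y) → 𝒪.obj z.1) := by
  letI : Algebra (𝒪.obj t) (𝒪.obj x) := (𝒪.map (homOfLE htx)).hom.toAlgebra
  letI : Algebra (𝒪.obj t) (𝒪.obj y) := (𝒪.map (homOfLE hty)).hom.toAlgebra
  letI : ∀ z : Sxy x y, Algebra (𝒪.obj t) (𝒪.obj z.1) :=
    fun z => (𝒪.map (homOfLE (htx.trans z.2.1))).hom.toAlgebra
  refine (Algebra.TensorProduct.productMap ?_ ?_).toRingHom
  · exact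
    { toRingHom := Pi.ringHom fun z => (𝒪.map (homOfLE z.2.1)).hom
      commutes' := fun a => by
        funext z
        show (𝒪.map (homOfLE htx) ≫ 𝒪.map (homOfLE z.2.1)).hom a =
          (𝒪.map (homOfLE (htx.trans z.2.1))).hom a
        rw [← 𝒪.map_comp]
        all_goals rfl }
  · exact
    { toRingHom := Pi.ringHom fun z => (𝒪.map (homOfLE z.2.2)).hom
      commutes' := fun a => by
        funext z
        show (𝒪.map (homOfLE hty) ≫ 𝒪.map (homOfLE z.2.2)).hom a =
          (𝒪.map (homOfLE (htx.trans z.2.1))).hom a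
        rw [← 𝒪.map_comp]
        all_goals rfl }

/-!
The canonical map `𝒪(y) ⊗_{𝒪(x)} 𝒪(y) → ∏_{y ≤ z} 𝒪(z)` of schematicity (ii) for `t = x`
sends `a ⊗ b` to `(a b)|_z`, so it factors through the multiplication map. It is faithfully
flat, hence injective, and therefore so is the multiplication map; injectivity of the
multiplication map is precisely the statement that `𝒪(x) → 𝒪(y)` is an epimorphism.
-/

namespace Algebra

open TensorProduct

variable {R S T : Type*} [CommSemiring R] [CommSemiring S] [Algebra R S] [CommSemiring T]
  [Algebra R T]

lemma isEpi_iff_injective_lmul' :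
    Algebra.IsEpi R S ↔ Function.Injective (lmul' R : S ⊗[R] S →ₐ[R] S) :=
  ⟨fun h => h.injective_lift_mul, fun h => ⟨h⟩⟩

lemma TensorProduct.lmul'_surjective :
    Function.Surjective (lmul' R : S ⊗[R] S →ₐ[R] S) :=
  fun s => ⟨s ⊗ₜ 1, by simp⟩

lemma TensorProduct.productMap_self (f : S →ₐ[R] T) : productMap f f = f.comp (lmul' R) := by
  ext <;> simp

lemma isEpi_of_injective_productMap_self (f : S →ₐ[R] T)
    (hf : Function.Injective (productMap f f)) : Algebra.IsEpi R S := by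
  rw [TensorProduct.productMap_self, AlgHom.coe_comp] at hf
  exact isEpi_iff_injective_lmul'.2 hf.of_comp

end Algebra

lemma isEpi_of_injective_canMap_self {x y : X} (h : x ≤ y)
    (hinj : Function.Injective (canMap 𝒪 h h)) :
    letI := (𝒪.map (homOfLE h)).hom.toAlgebra
    Algebra.IsEpi (𝒪.obj x) (𝒪.obj y) :=
  letI := (𝒪.map (homOfLE h)).hom.toAlgebra
  letI (z : Sxy y y) : Algebra (𝒪.obj x) (𝒪.obj z.1) :=
    (𝒪.map (homOfLE (h.trans z.2.1))).hom.toAlgebra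
  Algebra.isEpi_of_injective_productMap_self _ hinj

theorem schematic_restrictions_are_flat_epimorphisms
    -- schematicity (ii): the canonical maps to the products are faithfully flat
    (ff : ∀ {t x y : X} (htx : t ≤ x) (hty : t ≤ y),
      letI : Algebra (𝒪.obj t) (𝒪.obj x) := (𝒪.map (homOfLE htx)).hom.toAlgebra
      letI : Algebra (𝒪.obj t) (𝒪.obj y) := (𝒪.map (homOfLE hty)).hom.toAlgebra
      letI := (canMap 𝒪 htx hty).toAlgebra
      Module.FaithfullyFlat (TensorProduct (𝒪.obj t) (𝒪.obj x) (𝒪.obj y))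
        ((z : Sxy x y) → 𝒪.obj z.1))
    {x y : X} (h : x ≤ y) :
    -- `r_{x y}` is an epimorphism in the category of commutative rings ...
    Epi (𝒪.map (homOfLE h)) ∧
    -- ... equivalently, the multiplication map `𝒪(y) ⊗_{𝒪(x)} 𝒪(y) → 𝒪(y)` is bijective
    (letI : Algebra (𝒪.obj x) (𝒪.obj y) := (𝒪.map (homOfLE h)).hom.toAlgebra;
      Function.Bijective
        (Algebra.TensorProduct.lmul' (S := 𝒪.obj y) (𝒪.obj x) :
          TensorProduct (𝒪.obj x) (𝒪.obj y) (𝒪.obj y) →ₐ[𝒪.obj x] 𝒪.obj y)) := by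
  let := (𝒪.map (homOfLE h)).hom.toAlgebra
  let := (canMap 𝒪 h h).toAlgebra
  have := ff h h
  have hepi : Algebra.IsEpi (𝒪.obj x) (𝒪.obj y) :=
    isEpi_of_injective_canMap_self 𝒪 h (FaithfulSMul.algebraMap_injective _ _)
  exact ⟨CommRingCat.epi_iff_epi.2 hepi, Algebra.isEpi_iff_injective_lmul'.1 hepi,
    Algebra.TensorProduct.lmul'_surjective⟩
end

section
/- Let P be a finite partial order and let (X, φ, F, ψ) be a CommRing-structured P-datum with cylinder Cyl(X) and cylinder structure functor 𝒞 : Cyl(X) ⥤ CommRing. Consider the functor D = 𝒞^op ⋙ Spec : Cyl(X)^op ⥤ LocallyRingedSpace. For each p ∈ P let S(p) be the colimit in the category of locally ringed spaces of the functor (X p)^op ⥤ LocallyRingedSpace, x ↦ Spec(F p (x)); for p ≤ q let S(q) → S(p) be the morphism induced by the cocone whose leg at y ∈ X q is Spec((ψ_{p q})_y) : Spec(F q(y)) → Spec(F p(φ_{p q}(y))) followed by the colimit insertion at φ_{p q}(y); this makes p ↦ S(p) a functor P^op ⥤ LocallyRingedSpace. Then the canonical morphism colim_{p ∈ P^op}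 S(p) → colim_{Cyl(X)^op} D, induced by the slice inclusion functors (X p)^op → Cyl(X)^op, is an isomorphism of locally ringed spaces. (This is the statement that the cylinder of a datum of schematic spaces and the colimit of the datum represent the same locally ringed space under Spec.) -/
/-!
STATEMENT 9: For a `CommRing`-structured `P`-datum with cylinder structure functor
`𝒞 : Cyl(X) ⥤ CommRing`, the canonical morphism of locally ringed spaces
`colim_{p ∈ Pᵒᵖ} S(p) ⟶ colim_{Cyl(X)ᵒᵖ} (𝒞ᵒᵖ ⋙ Spec)` induced by the slice inclusions,
where `S(p) = colim_{x ∈ (X p)ᵒᵖ} Spec (F p (x))`, is an isomorphism: the cylinder and the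
colimit of the datum represent the same locally ringed space under `Spec`.
-/

open CategoryTheory CategoryTheory.Limits AlgebraicGeometry Opposite

structure PosetDatum (P : Type) [PartialOrder P] (X : P → Type) [∀ p, PartialOrder (X p)] where
  φ : ∀ {p q : P}, p ≤ q → X q →o X p
  φ_refl : ∀ (p : P) (x : X p), φ (le_refl p) x = x
  φ_trans : ∀ {p q r : P} (hpq : p ≤ q) (hqr : q ≤ r) (z : X r),
      φ (hpq.trans hqr) z = φ hpq (φ hqr z)

variable {P : Type} [PartialOrder P] {X : P → Type} [∀ p, PartialOrder (X p)]

/-- The cylinder of a `P`-datum of posets, as a type. -/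
def Cylinder (_D : PosetDatum P X) : Type := Σ p, X p

/-- The point of the cylinder determined by `p : P` and `x : X p`. -/
def Cylinder.mk (D : PosetDatum P X) (p : P) (x : X p) : Cylinder D := Sigma.mk p x

/-- The cylinder partial order: `(p, x) ≤ (q, y)` iff `p ≤ q` and `x ≤ φ_{p q} y`. -/
instance (D : PosetDatum P X) : PartialOrder (Cylinder D) where
  le a b := ∃ h : Sigma.fst a ≤ Sigma.fst b, Sigma.snd a ≤ D.φ h (Sigma.snd b)
  le_refl a := ⟨le_refl _, by rw [D.φ_refl]⟩
  le_trans a b c := by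
    rintro ⟨h1, hx1⟩ ⟨h2, hx2⟩
    exact ⟨h1.trans h2, by
      rw [D.φ_trans h1 h2]
      exact hx1.trans ((D.φ h1).monotone hx2)⟩
  le_antisymm a b := by
    obtain ⟨p, x⟩ := a
    obtain ⟨q, y⟩ := b
    rintro ⟨h1, hx1⟩ ⟨h2, hx2⟩
    obtain rfl : p = q := le_antisymm h1 h2
    obtain rfl : x = y :=
      le_antisymm (hx1.trans_eq (D.φ_refl p y)) (hx2.trans_eq (D.φ_refl p x))
    rfl

/-- Projections of a cylinder relation. -/
theorem Cylinder.le1 {D : PosetDatum P X} {a b : Cylinder D} (h : a ≤ b) :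
    Sigma.fst a ≤ Sigma.fst b :=
  h.elim fun h1 _ => h1

theorem Cylinder.le2 {D : PosetDatum P X} {a b : Cylinder D} (h : a ≤ b) :
    Sigma.snd a ≤ D.φ (Cylinder.le1 h) (Sigma.snd b) :=
  h.elim fun _ h2 => h2

/-- A `CommRing`-structure on a `P`-datum of posets. -/
structure CStruct (D : PosetDatum P X) (F : ∀ p, X p ⥤ CommRingCat.{0}) where
  ψ : ∀ {p q : P} (h : p ≤ q) (y : X q), (F p).obj (D.φ h y) ⟶ (F q).obj y
  ψ_natural : ∀ {p q : P} (h : p ≤ q) {y y' : X q} (hy : y ≤ y'),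
      (F p).map (homOfLE ((D.φ h).monotone hy)) ≫ ψ h y' = ψ h y ≫ (F q).map (homOfLE hy)
  ψ_refl : ∀ (p : P) (y : X p),
      ψ (le_refl p) y = eqToHom (congrArg (F p).obj (D.φ_refl p y))
  ψ_trans : ∀ {p q r : P} (hpq : p ≤ q) (hqr : q ≤ r) (z : X r),
      ψ (hpq.trans hqr) z =
        eqToHom (congrArg (F p).obj (D.φ_trans hpq hqr z)) ≫ ψ hpq (D.φ hqr z) ≫ ψ hqr z

variable {D : PosetDatum P X} {F : ∀ p, X p ⥤ CommRingCat.{0}}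

/-- The cylinder structure functor `𝒞 : Cyl(X) ⥤ CommRing`: on objects `(p, x) ↦ F p (x)`,
on morphisms the cylinder structure maps. -/
def cylFunctor (S : CStruct D F) : Cylinder D ⥤ CommRingCat.{0} where
  obj a := (F (Sigma.fst a)).obj (Sigma.snd a)
  map {a b} f :=
    (F (Sigma.fst a)).map (homOfLE (Cylinder.le2 (leOfHom f))) ≫
      S.ψ (Cylinder.le1 (leOfHom f)) (Sigma.snd b)
  map_id a := by
    show (F (Sigma.fst a)).map (homOfLE _) ≫ S.ψ (le_refl (Sigma.fst a)) (Sigma.snd a) = _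
    rw [S.ψ_refl, ← eqToHom_map, ← CategoryTheory.Functor.map_comp,
      show (homOfLE _ ≫ eqToHom (D.φ_refl (Sigma.fst a) (Sigma.snd a)) :
        Sigma.snd a ⟶ Sigma.snd a) = 𝟙 _ from Subsingleton.elim _ _,
      CategoryTheory.Functor.map_id]
    exact D.φ_refl _ _
  map_comp {a b c} f g := by
    have h1 : a ≤ b := leOfHom f
    have h2 : b ≤ c := leOfHom g
    show (F (Sigma.fst a)).map (homOfLE _) ≫
        S.ψ ((Cylinder.le1 h1).trans (Cylinder.le1 h2)) (Sigma.snd c) =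
      ((F (Sigma.fst a)).map (homOfLE (Cylinder.le2 h1)) ≫
          S.ψ (Cylinder.le1 h1) (Sigma.snd b)) ≫
        ((F (Sigma.fst b)).map (homOfLE (Cylinder.le2 h2)) ≫
          S.ψ (Cylinder.le1 h2) (Sigma.snd c))
    rw [S.ψ_trans (Cylinder.le1 h1) (Cylinder.le1 h2), ← eqToHom_map]
    slice_rhs 2 3 => rw [← S.ψ_natural (Cylinder.le1 h1) (Cylinder.le2 h2)]
    slice_rhs 1 2 => rw [← CategoryTheory.Functor.map_comp]
    slice_lhs 1 2 => rw [← CategoryTheory.Functor.map_comp]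
    simp only [Category.assoc]
    congr 1
    exact D.φ_trans _ _ _

/-- The cylinder structure map of a within-slice relation is the corresponding map of
`F p`. -/
theorem cylFunctor_map_slice (S : CStruct D F) {p : P} {x x' : X p} (hx : x ≤ x')
    (h : Cylinder.mk D p x ≤ Cylinder.mk D p x') :
    (cylFunctor S).map (homOfLE h) = (F p).map (homOfLE hx) := by
  show (F p).map (homOfLE _) ≫ S.ψ (le_refl p) x' = _
  erw [S.ψ_refl, ← eqToHom_map, ← CategoryTheory.Functor.map_comp]
  · exact congrArg (F p).map (Subsingleton.elim (α := x ⟶ x') _ _)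
  · exact D.φ_refl p x'

/-- The cylinder structure map of the relation `(p, φ_{p q} y) ≤ (q, y)` is `(ψ_{p q})_y`. -/
theorem cylFunctor_map_psi (S : CStruct D F) {p q : P} (h : p ≤ q) (y : X q)
    (hrel : Cylinder.mk D p (D.φ h y) ≤ Cylinder.mk D q y) :
    (cylFunctor S).map (homOfLE hrel) = S.ψ h y := by
  show (F p).map (homOfLE (le_refl (D.φ h y))) ≫ S.ψ h y = S.ψ h y
  simp

/-- The diagram of spectra indexed by the (opposite of the) fiber `X p`. -/
noncomputable def SpecF (F : ∀ p, X p ⥤ CommRingCat.{0}) (p : P) :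
    (X p)ᵒᵖ ⥤ LocallyRingedSpace.{0} :=
  (F p).op ⋙ Spec.toLocallyRingedSpace

theorem lRS_eqToHom {R S' : CommRingCat.{0}} (e : R = S') :
    Spec.locallyRingedSpaceMap (eqToHom e) =
      eqToHom (congrArg Spec.locallyRingedSpaceObj e).symm := by
  subst e
  simp [Spec.locallyRingedSpaceMap_id]

/-- The transition cocone defining `S(q) ⟶ S(p)` for `p ≤ q`: its leg at `y ∈ X q` is
`Spec ((ψ_{p q})_y)` followed by the colimit insertion at `φ_{p q} y`. -/
noncomputable def transCocone (S : CStruct D F) {p q : P} (h : p ≤ q) :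
    Cocone (SpecF F q) where
  pt := colimit (SpecF F p)
  ι :=
    { app := fun yy =>
        Spec.toLocallyRingedSpace.map (S.ψ h yy.unop).op ≫
          colimit.ι (SpecF F p) (op (D.φ h yy.unop))
      naturality := fun yy1 yy2 f => by
        dsimp [SpecF, Spec.toLocallyRingedSpace]
        rw [Category.comp_id, ← Category.assoc, ← Spec.locallyRingedSpaceMap_comp,
          show S.ψ h yy2.unop ≫ (F q).map f.unop =
              (F p).map (homOfLE ((D.φ h).monotone (leOfHom f.unop))) ≫ S.ψ h yy1.unop from
            (S.ψ_natural h (leOfHom f.unop)).symm,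
          Spec.locallyRingedSpaceMap_comp, Category.assoc]
        congr 1
        exact colimit.w (SpecF F p) ((homOfLE ((D.φ h).monotone (leOfHom f.unop))).op) }

/-- The functor `Pᵒᵖ ⥤ LocallyRingedSpace`, `p ↦ S(p) = colim_{x ∈ (X p)ᵒᵖ} Spec (F p x)`,
with transition morphisms induced by the `ψ`'s. -/
noncomputable def Sfun (S : CStruct D F) : Pᵒᵖ ⥤ LocallyRingedSpace.{0} where
  obj pp := colimit (SpecF F pp.unop)
  map {pp qq} f := colimit.desc (SpecF F pp.unop) (transCocone S (leOfHom f.unop))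
  map_id pp := by
    apply colimit.hom_ext
    intro yy
    erw [colimit.ι_desc, Category.comp_id]
    dsimp [transCocone, Spec.toLocallyRingedSpace]
    have E : yy = op (D.φ (le_refl pp.unop) yy.unop) := by rw [D.φ_refl]
    rw [S.ψ_refl, lRS_eqToHom, ← colimit.w (SpecF F pp.unop) (eqToHom E), eqToHom_map]
    rfl
  map_comp {pp qq rr} f g := by
    apply colimit.hom_ext
    intro yy
    erw [colimit.ι_desc, colimit.ι_desc_assoc]
    dsimp only [transCocone]
    refine Eq.trans ?_ (Category.assoc _ _ _).symm
    erw [colimit.ι_desc]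
    dsimp only
    rw [show S.ψ (leOfHom (f ≫ g).unop) yy.unop =
        eqToHom (congrArg (F rr.unop).obj
          (D.φ_trans (leOfHom g.unop) (leOfHom f.unop) yy.unop)) ≫
          S.ψ (leOfHom g.unop) (D.φ (leOfHom f.unop) yy.unop) ≫
          S.ψ (leOfHom f.unop) yy.unop from
      S.ψ_trans (leOfHom g.unop) (leOfHom f.unop) yy.unop]
    have E : op (D.φ (leOfHom g.unop) (D.φ (leOfHom f.unop) yy.unop)) =
        op (D.φ ((leOfHom g.unop).trans (leOfHom f.unop)) yy.unop) :=
      (congrArg op (D.φ_trans (leOfHom g.unop) (leOfHom f.unop) yy.unop)).symm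
    erw [op_comp, op_comp, Functor.map_comp, Functor.map_comp, eqToHom_op, eqToHom_map,
      Category.assoc, Category.assoc, ← colimit.w (SpecF F rr.unop) (eqToHom E),
      eqToHom_map]
    rfl

/-- The colimit diagram of the cylinder: `𝒞ᵒᵖ ⋙ Spec : Cyl(X)ᵒᵖ ⥤ LocallyRingedSpace`. -/
noncomputable def cylSpec (S : CStruct D F) : (Cylinder D)ᵒᵖ ⥤ LocallyRingedSpace.{0} :=
  (cylFunctor S).op ⋙ Spec.toLocallyRingedSpace

/-- The cocone over `SpecF F p` given by the slice inclusion `x ↦ (p, x)` into the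
cylinder. -/
noncomputable def sliceCocone (S : CStruct D F) (p : P) : Cocone (SpecF F p) where
  pt := colimit (cylSpec S)
  ι :=
    { app := fun xx => colimit.ι (cylSpec S) (op (Cylinder.mk D p xx.unop))
      naturality := fun xx1 xx2 f => by
        dsimp
        erw [Category.comp_id]
        have hrel : Cylinder.mk D p xx2.unop ≤ Cylinder.mk D p xx1.unop :=
          ⟨le_refl p, show (xx2.unop : X p) ≤ D.φ (le_refl p) xx1.unop by
            rw [D.φ_refl]; exact leOfHom f.unop⟩
        rw [← colimit.w (cylSpec S) ((homOfLE hrel).op)]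
        congr 1
        show Spec.toLocallyRingedSpace.map ((F p).map f.unop).op =
          Spec.toLocallyRingedSpace.map ((cylFunctor S).map (homOfLE hrel)).op
        rw [cylFunctor_map_slice S (leOfHom f.unop) hrel]
        rfl }

/-- The canonical comparison morphism `colim_{p ∈ Pᵒᵖ} S(p) ⟶ colim_{Cyl(X)ᵒᵖ} (𝒞ᵒᵖ ⋙ Spec)`
induced by the slice inclusions. -/
noncomputable def canonicalComparison (S : CStruct D F) :
    colimit (Sfun S) ⟶ colimit (cylSpec S) :=
  colimit.desc (Sfun S)
    { pt := colimit (cylSpec S)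
      ι :=
        { app := fun pp => colimit.desc (SpecF F pp.unop) (sliceCocone S pp.unop)
          naturality := fun pp qq f => by
            dsimp
            erw [Category.comp_id]
            apply colimit.hom_ext
            intro yy
            erw [← Category.assoc]
            dsimp [Sfun]
            erw [colimit.ι_desc]
            dsimp only [transCocone]
            refine (Category.assoc _ _ _).trans ?_
            erw [colimit.ι_desc, colimit.ι_desc]
            dsimp only [sliceCocone]
            have hrel : Cylinder.mk D qq.unop (D.φ (leOfHom f.unop) yy.unop) ≤
                Cylinder.mk D pp.unop yy.unop :=
              ⟨leOfHom f.unop,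
                show D.φ (leOfHom f.unop) yy.unop ≤ D.φ (leOfHom f.unop) yy.unop from
                  le_refl _⟩
            rw [← colimit.w (cylSpec S) ((homOfLE hrel).op)]
            exact congrArg (fun m => m ≫ colimit.ι (cylSpec S)
                (op (Cylinder.mk D qq.unop (D.φ (leOfHom f.unop) yy.unop))))
              (congrArg (fun m => Spec.toLocallyRingedSpace.map (Quiver.Hom.op m))
                (cylFunctor_map_psi S (leOfHom f.unop) yy.unop hrel).symm) } }

/-!
Both colimits are generated by the spectra `Spec (F p x)`. For `(p, x) ≤ (q, y)` the cylinder
transition map `Spec (F q y) ⟶ Spec (F p x)` is `Spec ψ_{p q}` followed by a transition inside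
the slice `p`, and `Spec ψ_{p q}` is exactly what the transition `S(q) ⟶ S(p)` does on the
insertion of `Spec (F q y)`. Hence the iterated insertions `Spec (F p x) ⟶ S(p) ⟶ colim S` form
a cocone over the cylinder diagram, and the induced morphism is inverse to the comparison
because both composites fix every insertion.
-/

theorem ι_comp_Sfun_map (S : CStruct D F) {p q : P} (h : p ≤ q) (y : X q) :
    colimit.ι (SpecF F q) (op y) ≫ (Sfun S).map (homOfLE h).op =
      Spec.toLocallyRingedSpace.map (S.ψ h y).op ≫ colimit.ι (SpecF F p) (op (D.φ h y)) :=
  colimit.ι_desc _ _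

theorem cylSpec_map_homOfLE (S : CStruct D F) {p q : P} {x : X p} {y : X q}
    (h : Cylinder.mk D p x ≤ Cylinder.mk D q y) :
    (cylSpec S).map (homOfLE h).op =
      Spec.toLocallyRingedSpace.map (S.ψ (Cylinder.le1 h) y).op ≫
        (SpecF F p).map (homOfLE (Cylinder.le2 h)).op :=
  Spec.toLocallyRingedSpace.map_comp _ _

theorem cylSpec_map_comp_ι_comp_ι (S : CStruct D F) {p q : P} {x : X p} {y : X q}
    (h : Cylinder.mk D p x ≤ Cylinder.mk D q y) :
    (cylSpec S).map (homOfLE h).op ≫ colimit.ι (SpecF F p) (op x) ≫ colimit.ι (Sfun S) (op p) =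
      colimit.ι (SpecF F q) (op y) ≫ colimit.ι (Sfun S) (op q) := by
  erw [cylSpec_map_homOfLE, Category.assoc, ← Category.assoc ((SpecF F p).map _), colimit.w,
    ← Category.assoc, ← ι_comp_Sfun_map S (Cylinder.le1 h), Category.assoc, colimit.w]
  rfl

noncomputable def iteratedColimitCocone (S : CStruct D F) : Cocone (cylSpec S) where
  pt := colimit (Sfun S)
  ι.app a := colimit.ι (SpecF F a.unop.fst) (op a.unop.snd) ≫ colimit.ι (Sfun S) (op a.unop.fst)
  ι.naturality _ _ f :=
    (cylSpec_map_comp_ι_comp_ι S (leOfHom f.unop)).trans (Category.comp_id _).symm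

noncomputable def inverseComparison (S : CStruct D F) :
    colimit (cylSpec S) ⟶ colimit (Sfun S) :=
  colimit.desc (cylSpec S) (iteratedColimitCocone S)

theorem ι_comp_ι_comp_canonicalComparison (S : CStruct D F) (p : P) (x : X p) :
    colimit.ι (SpecF F p) (op x) ≫ colimit.ι (Sfun S) (op p) ≫ canonicalComparison S =
      colimit.ι (cylSpec S) (op (Cylinder.mk D p x)) := by
  erw [colimit.ι_desc, colimit.ι_desc]
  rfl

theorem ι_inverseComparison (S : CStruct D F) (p : P) (x : X p) :
    colimit.ι (cylSpec S) (op (Cylinder.mk D p x)) ≫ inverseComparison S =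
      colimit.ι (SpecF F p) (op x) ≫ colimit.ι (Sfun S) (op p) :=
  colimit.ι_desc _ _

theorem canonicalComparison_isIso_general
    (S : CStruct D F) :
    IsIso (canonicalComparison S) := by
  refine ⟨inverseComparison S, ?_, ?_⟩
  · refine colimit.hom_ext fun ⟨p⟩ => colimit.hom_ext fun ⟨x⟩ => ?_
    rw [Category.comp_id]
    erw [reassoc_of% (ι_comp_ι_comp_canonicalComparison S p x), ι_inverseComparison]
  · refine colimit.hom_ext fun ⟨⟨p, x⟩⟩ => ?_
    rw [Category.comp_id]
    erw [← Category.assoc, ι_inverseComparison, Category.assoc,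
      ι_comp_ι_comp_canonicalComparison]
    rfl

/-- The cylinder of a datum of schematic spaces and the colimit of the datum represent the
same locally ringed space: the canonical comparison morphism is an isomorphism. -/
theorem canonicalComparison_isIso
    (hP : Finite P) (hX : ∀ p, Finite (X p)) (S : CStruct D F) :
    IsIso (canonicalComparison S) :=
  canonicalComparison_isIso_general S
end
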